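/- The integral equation for the signature kernel: for C^1 paths X, Y, the function U(s,t) = k(X|_{[0,s]}, Y|_{[0,t]}) satisfies U(s,t) = 1 + ∫_0^s ∫_0^t U(u,v) (Ẋ_u · Ẏ_v) du dv. -/

import Mathlib

/-!
Because `sig` peels off the first letter, the key step is the last-letter expansion
`S^{wa}_{0,s}(X) = ∫₀ˢ S^w_{0,u}(X) dX^a_u` (induction on `w`, Fubini on a triangle). Splitting
off the empty word and expanding every other word by its last letter gives
`U(s,t) - 1 = ∑_{a,w} ∫₀ˢ∫₀ᵗ S^w_{0,u}(X) S^w_{0,v}(Y) Ẋ^a_u Ẏ^a_v dv du`.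
The factorial decay `|S^w_{0,u}(X)| ≤ (M u)^|w| / |w|!` dominates every series involved, so the
sum moves inside both integrals, where it factors as `U(u,v) (Ẋ_u · Ẏ_v)`.
-/

open MeasureTheory intervalIntegral

/-- Iterated-integral signature coefficient of a path `X : ℝ → (Fin d → ℝ)` over `[a, b]`. -/
noncomputable def sig {d : ℕ} (X : ℝ → Fin d → ℝ) : List (Fin d) → ℝ → ℝ → ℝ
  | [], _, _ => 1
  | a :: w, s, t => ∫ u in s..t, deriv (fun r => X r a) u * sig X w u t

open Set Nat

theorem tsum_intervalIntegral_eq_of_norm_le {ι E : Type*} [Countable ι] [NormedAddCommGroup E]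
    [NormedSpace ℝ E] [CompleteSpace E] {f : ι → ℝ → E} {b : ι → ℝ} {a c : ℝ}
    (hf : ∀ i, Continuous (f i)) (hfb : ∀ i, ∀ x ∈ uIcc a c, ‖f i x‖ ≤ b i) (hb : Summable b) :
    ∑' i, ∫ x in a..c, f i x = ∫ x in a..c, ∑' i, f i x := by
  have hbound : ∀ i x, x ∈ uIoc a c → ‖f i x‖ ≤ b i := fun i x hx =>
    hfb i x (uIoc_subset_uIcc hx)
  exact (hasSum_integral_of_dominated_convergence (fun i _ => b i)
    (fun i => (hf i).aestronglyMeasurable) (fun i => ae_of_all _ (hbound i))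
    (ae_of_all _ fun _ _ => hb) intervalIntegrable_const
    (ae_of_all _ fun x hx => (hb.of_norm_bounded (fun i => hbound i x hx)).hasSum)).tsum_eq

theorem tsum_integral_mul_integral_eq {ι : Type*} [Countable ι] {f g : ι → ℝ → ℝ}
    {A B : ι → ℝ} {a b c e : ℝ} (hf : ∀ i, Continuous (f i)) (hg : ∀ i, Continuous (g i))
    (hfA : ∀ i, ∀ u ∈ uIcc a b, |f i u| ≤ A i) (hgB : ∀ i, ∀ v ∈ uIcc c e, |g i v| ≤ B i)
    (hAB : Summable fun i => A i * B i) :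
    ∑' i, (∫ u in a..b, f i u) * (∫ v in c..e, g i v)
      = ∫ u in a..b, ∫ v in c..e, ∑' i, f i u * g i v := by
  have hgint : ∀ i, ‖∫ v in c..e, g i v‖ ≤ B i * |e - c| := fun i =>
    norm_integral_le_of_norm_le_const fun v hv => hgB i v (uIoc_subset_uIcc hv)
  calc ∑' i, (∫ u in a..b, f i u) * (∫ v in c..e, g i v)
      = ∑' i, ∫ u in a..b, f i u * ∫ v in c..e, g i v := by
        simp only [intervalIntegral.integral_mul_const]
    _ = ∫ u in a..b, ∑' i, f i u * ∫ v in c..e, g i v := by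
        refine tsum_intervalIntegral_eq_of_norm_le (b := fun i => A i * B i * |e - c|)
          (fun i => (hf i).mul continuous_const) (fun i u hu => ?_) (hAB.mul_right _)
        rw [norm_mul, mul_assoc]
        exact mul_le_mul (hfA i u hu) (hgint i) (norm_nonneg _)
          ((abs_nonneg _).trans (hfA i u hu))
    _ = ∫ u in a..b, ∑' i, ∫ v in c..e, f i u * g i v := by
        simp only [intervalIntegral.integral_const_mul]
    _ = ∫ u in a..b, ∫ v in c..e, ∑' i, f i u * g i v := by
        refine integral_congr fun u hu => tsum_intervalIntegral_eq_of_norm_le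
          (fun i => continuous_const.mul (hg i)) (fun i v hv => ?_) hAB
        rw [norm_mul]
        exact mul_le_mul (hfA i u hu) (hgB i v hv) (norm_nonneg _)
          ((abs_nonneg _).trans (hfA i u hu))

theorem intervalIntegral_triangle_swap {F : ℝ → ℝ → ℝ} (hF : Continuous (Function.uncurry F))
    {s t : ℝ} (hst : s ≤ t) :
    ∫ r in s..t, ∫ u in r..t, F r u = ∫ u in s..t, ∫ r in s..u, F r u := by
  -- Both sides integrate `F` over the triangle `s < r < u ≤ t`.
  set G : ℝ × ℝ → ℝ := {p : ℝ × ℝ | p.1 < p.2}.indicator (Function.uncurry F)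
  have hG : Integrable G ((volume.restrict (Ioc s t)).prod (volume.restrict (Ioc s t))) := by
    rw [Measure.prod_restrict, ← Measure.volume_eq_prod]
    exact ((hF.continuousOn.integrableOn_compact (isCompact_Icc.prod isCompact_Icc)).mono_set
      (prod_mono Ioc_subset_Icc_self Ioc_subset_Icc_self)).indicator
        (isOpen_lt continuous_fst continuous_snd).measurableSet
  have hleft : ∀ r ∈ Ioc s t, ∫ u in Ioc s t, G (r, u) = ∫ u in r..t, F r u := by
    intro r hr
    have : (fun u => G (r, u)) = (Ioi r).indicator (F r) := by
      ext u; by_cases h : r < u <;> simp [G, indicator, h]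
    rw [this, setIntegral_indicator measurableSet_Ioi, Ioc_inter_Ioi, max_eq_right hr.1.le,
      integral_of_le hr.2]
  have hright : ∀ u ∈ Ioc s t, ∫ r in Ioc s t, G (r, u) = ∫ r in s..u, F r u := by
    intro u hu
    have : (fun r => G (r, u)) = (Iio u).indicator (fun r => F r u) := by
      ext r; by_cases h : r < u <;> simp [G, indicator, h]
    have hset : Ioc s t ∩ Iio u = Ioo s u := by
      ext r; constructor
      · rintro ⟨⟨h1, -⟩, h2⟩; exact ⟨h1, h2⟩
      · rintro ⟨h1, h2⟩; exact ⟨⟨h1, h2.le.trans hu.2⟩, h2⟩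
    rw [this, setIntegral_indicator measurableSet_Iio, hset, integral_of_le hu.1.le,
      integral_Ioc_eq_integral_Ioo]
  rw [integral_of_le hst, integral_of_le hst, ← setIntegral_congr_fun measurableSet_Ioc hleft,
    ← setIntegral_congr_fun measurableSet_Ioc hright]
  exact integral_integral_swap (f := fun r u => G (r, u)) hG

theorem tsum_list_eq_nil_add_tsum_append_singleton {α E : Type*} [AddCommGroup E]
    [TopologicalSpace E] [IsTopologicalAddGroup E] [T2Space E] {F : List α → E}
    (hF : Summable F) :
    ∑' w, F w = F [] + ∑' p : α × List α, F (p.2 ++ [p.1]) := by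
  classical
  rw [hF.tsum_eq_add_tsum_ite []]
  congr 1
  have hinj : Function.Injective fun p : α × List α => p.2 ++ [p.1] := by
    rintro ⟨a, w⟩ ⟨b, v⟩ h
    obtain ⟨hw, hab⟩ := List.append_inj' h rfl
    simp_all
  rw [← hinj.tsum_eq]
  · simp
  · intro w hw
    rcases w.eq_nil_or_concat with rfl | ⟨v, a, rfl⟩
    · simp at hw
    · exact ⟨(a, v), by simp⟩

theorem summable_pow_length_div_factorial {α : Type*} [Fintype α] {c : ℝ} (hc : 0 ≤ c) :
    Summable fun w : List α => c ^ w.length / w.length ! := by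
  rw [← List.equivSigmaTuple.symm.summable_iff]
  refine (summable_sigma_of_nonneg fun x => ?_).mpr ⟨fun _ => .of_finite, ?_⟩
  · simp only [Function.comp_apply]; positivity
  simpa [List.equivSigmaTuple, mul_pow, mul_div_assoc] using
    (Real.summable_pow_div_factorial (Fintype.card α * c))

theorem pow_div_factorial_mul_pow_div_factorial_le {x y : ℝ} (hx : 0 ≤ x) (hy : 0 ≤ y) (n : ℕ) :
    x ^ n / n ! * (y ^ n / n !) ≤ (x * y) ^ n / n ! := by
  rw [mul_pow, mul_div_assoc]
  gcongr
  exact div_le_self (by positivity) (by exact_mod_cast n.factorial_pos)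

theorem integral_mul_pow_div_factorial (c s t : ℝ) (n : ℕ) :
    ∫ u in s..t, c * ((c * (t - u)) ^ n / n !) = (c * (t - s)) ^ (n + 1) / (n + 1)! := by
  rw [intervalIntegral.integral_comp_sub_left (fun x => c * ((c * x) ^ n / n !)), sub_self]
  simp only [mul_pow, intervalIntegral.integral_const_mul, intervalIntegral.integral_div,
    integral_pow, zero_pow n.succ_ne_zero, sub_zero, factorial_succ, cast_mul, cast_add, cast_one]
  field_simp
  ring

theorem summable_prod_snd_of_nonneg {α β : Type*} [Finite α] {g : β → ℝ} (hg0 : 0 ≤ g)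
    (hg : Summable g) : Summable fun p : α × β => g p.2 :=
  (summable_prod_of_nonneg fun p => hg0 p.2).mpr ⟨fun _ => hg, .of_finite⟩

theorem tsum_prod_mul_mul_eq {α β : Type*} [Fintype α] (x y : α → ℝ) {f g : β → ℝ}
    (hfg : Summable fun w => ‖f w * g w‖) :
    ∑' p : α × β, x p.1 * f p.2 * (y p.1 * g p.2) = (∑' w, f w * g w) * ∑ a, x a * y a := by
  calc ∑' p : α × β, x p.1 * f p.2 * (y p.1 * g p.2)
      = ∑' p : α × β, x p.1 * y p.1 * (f p.2 * g p.2) := tsum_congr fun p => by ring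
    _ = (∑' a, x a * y a) * ∑' w, f w * g w :=
        (tsum_mul_tsum_of_summable_norm (f := fun a => x a * y a) .of_finite hfg).symm
    _ = (∑' w, f w * g w) * ∑ a, x a * y a := by rw [tsum_fintype, mul_comm]

section Signature

variable {d : ℕ} {X Y : ℝ → Fin d → ℝ}

theorem continuous_sig (hX : ∀ a, Continuous (deriv fun r => X r a)) (w : List (Fin d)) :
    Continuous fun p : ℝ × ℝ => sig X w p.1 p.2 := by
  induction w with
  | nil => exact continuous_const
  | cons a w ih =>
    set g : ℝ → ℝ → ℝ := fun c u => deriv (fun r => X r a) u * sig X w u c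
    have hg : Continuous (Function.uncurry g) :=
      ((hX a).comp continuous_snd).mul (ih.comp (continuous_snd.prodMk continuous_fst))
    have hsub : ∀ p : ℝ × ℝ,
        sig X (a :: w) p.1 p.2 = (∫ u in 0..p.2, g p.2 u) - ∫ u in 0..p.1, g p.2 u := fun p =>
      (integral_interval_sub_left ((hg.uncurry_left _).intervalIntegrable _ _)
        ((hg.uncurry_left _).intervalIntegrable _ _)).symm
    simp only [hsub]
    have hg' : Continuous (Function.uncurry fun (p : ℝ × ℝ) u => g p.2 u) :=
      hg.comp ((continuous_snd.comp continuous_fst).prodMk continuous_snd)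
    exact (continuous_parametric_intervalIntegral_of_continuous hg' continuous_snd).sub
      (continuous_parametric_intervalIntegral_of_continuous hg' continuous_fst)

theorem sig_append_singleton (hX : ∀ a, Continuous (deriv fun r => X r a)) (w : List (Fin d))
    (a : Fin d) {s t : ℝ} (hst : s ≤ t) :
    sig X (w ++ [a]) s t = ∫ u in s..t, deriv (fun r => X r a) u * sig X w s u := by
  induction w generalizing s with
  | nil => simp [sig]
  | cons b w ih =>
    have hF : Continuous (Function.uncurry fun r u =>
        deriv (fun r => X r b) r * (deriv (fun r => X r a) u * sig X w r u)) :=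
      ((hX b).comp continuous_fst).mul (((hX a).comp continuous_snd).mul (continuous_sig hX w))
    calc sig X (b :: w ++ [a]) s t
        = ∫ r in s..t, deriv (fun r => X r b) r *
            ∫ u in r..t, deriv (fun r => X r a) u * sig X w r u := by
          rw [List.cons_append, sig]
          refine integral_congr fun r hr => ?_
          rw [uIcc_of_le hst] at hr
          simp only [ih hr.2]
      _ = ∫ r in s..t, ∫ u in r..t,
            deriv (fun r => X r b) r * (deriv (fun r => X r a) u * sig X w r u) := by
          simp only [intervalIntegral.integral_const_mul]
      _ = ∫ u in s..t, ∫ r in s..u,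
            deriv (fun r => X r b) r * (deriv (fun r => X r a) u * sig X w r u) :=
          intervalIntegral_triangle_swap hF hst
      _ = ∫ u in s..t, deriv (fun r => X r a) u * sig X (b :: w) s u := by
          simp only [sig, ← intervalIntegral.integral_const_mul, mul_left_comm]

theorem abs_sig_le {M s t : ℝ} (hst : s ≤ t)
    (hM : ∀ a, ∀ r ∈ Icc s t, |deriv (fun r => X r a) r| ≤ M) (w : List (Fin d)) :
    |sig X w s t| ≤ (M * (t - s)) ^ w.length / w.length ! := by
  induction w generalizing s with
  | nil => simp [sig]
  | cons a w ih =>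
    have hM0 : 0 ≤ M := (abs_nonneg _).trans (hM a s ⟨le_rfl, hst⟩)
    have hterm : ∀ u ∈ uIoc s t, ‖deriv (fun r => X r a) u * sig X w u t‖
        ≤ M * ((M * (t - u)) ^ w.length / w.length !) := by
      intro u hu
      rw [uIoc_of_le hst] at hu
      rw [norm_mul]
      exact mul_le_mul (hM a u ⟨hu.1.le, hu.2⟩)
        (ih hu.2 fun b r hr => hM b r ⟨hu.1.le.trans hr.1, hr.2⟩) (norm_nonneg _) hM0
    calc |sig X (a :: w) s t|
        ≤ |∫ u in s..t, M * ((M * (t - u)) ^ w.length / w.length !)| :=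
          norm_integral_le_abs_of_norm_le (ae_restrict_of_forall_mem measurableSet_uIoc hterm)
            (by apply Continuous.intervalIntegrable; fun_prop)
      _ = (M * (t - s)) ^ (a :: w).length / (a :: w).length ! := by
          rw [integral_mul_pow_div_factorial, abs_of_nonneg (by
            have := sub_nonneg.2 hst; positivity)]
          rfl

theorem exists_abs_sig_le (hX : ∀ a, Continuous (deriv fun r => X r a)) (T : ℝ) :
    ∃ M, 0 ≤ M ∧
      (∀ w, ∀ u ∈ Icc 0 T, |sig X w 0 u| ≤ (M * T) ^ w.length / w.length !) ∧
      ∀ a w, ∀ u ∈ Icc 0 T, |deriv (fun r => X r a) u * sig X w 0 u|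
        ≤ M * ((M * T) ^ w.length / w.length !) := by
  obtain ⟨C, hC⟩ := (isCompact_Icc (a := (0 : ℝ)) (b := T)).exists_bound_of_continuousOn
    (continuous_pi hX).continuousOn
  set M := max C 0
  have hM0 : 0 ≤ M := le_max_right _ _
  have hM : ∀ a, ∀ r ∈ Icc 0 T, |deriv (fun r => X r a) r| ≤ M := fun a r hr =>
    ((norm_le_pi_norm _ a).trans (hC r hr)).trans (le_max_left _ _)
  have hsig : ∀ w, ∀ u ∈ Icc 0 T, |sig X w 0 u| ≤ (M * T) ^ w.length / w.length ! := by
    intro w u hu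
    calc |sig X w 0 u| ≤ (M * (u - 0)) ^ w.length / w.length ! :=
          abs_sig_le hu.1 (fun a r hr => hM a r ⟨hr.1, hr.2.trans hu.2⟩) w
      _ ≤ (M * T) ^ w.length / w.length ! := by
          rw [sub_zero]
          gcongr
          exacts [mul_nonneg hM0 hu.1, hu.2]
  refine ⟨M, hM0, hsig, fun a w u hu => ?_⟩
  rw [abs_mul]
  exact mul_le_mul (hM a u hu) (hsig w u hu) (abs_nonneg _) hM0

theorem summable_norm_sig_mul_sig (hX : ∀ a, Continuous (deriv fun r => X r a))
    (hY : ∀ a, Continuous (deriv fun r => Y r a)) {u v : ℝ} (hu : 0 ≤ u) (hv : 0 ≤ v) :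
    Summable fun w => ‖sig X w 0 u * sig Y w 0 v‖ := by
  obtain ⟨Mx, hMx0, hsigX, -⟩ := exists_abs_sig_le hX (max u v)
  obtain ⟨My, hMy0, hsigY, -⟩ := exists_abs_sig_le hY (max u v)
  refine (summable_pow_length_div_factorial (α := Fin d) (c := Mx * max u v * (My * max u v))
    (by positivity)).of_nonneg_of_le (fun _ => norm_nonneg _) fun w => ?_
  rw [norm_mul]
  exact (mul_le_mul (hsigX w u ⟨hu, le_max_left _ _⟩) (hsigY w v ⟨hv, le_max_right _ _⟩)
    (abs_nonneg _) (by positivity)).trans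
      (pow_div_factorial_mul_pow_div_factorial_le (by positivity) (by positivity) _)

theorem tsum_sig_append_singleton_mul_eq_integral (hX : ∀ a, Continuous (deriv fun r => X r a))
    (hY : ∀ a, Continuous (deriv fun r => Y r a)) {s t : ℝ} (hs : 0 ≤ s) (ht : 0 ≤ t) :
    ∑' p : Fin d × List (Fin d), sig X (p.2 ++ [p.1]) 0 s * sig Y (p.2 ++ [p.1]) 0 t
      = ∫ u in 0..s, ∫ v in 0..t, ∑' p : Fin d × List (Fin d),
          deriv (fun r => X r p.1) u * sig X p.2 0 u *
            (deriv (fun r => Y r p.1) v * sig Y p.2 0 v) := by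
  set T := max s t
  have hT : 0 ≤ T := hs.trans (le_max_left _ _)
  obtain ⟨Mx, hMx0, -, hderivX⟩ := exists_abs_sig_le hX T
  obtain ⟨My, hMy0, -, hderivY⟩ := exists_abs_sig_le hY T
  have hsT : uIcc 0 s ⊆ Icc 0 T := uIcc_subset_Icc (left_mem_Icc.2 hT) ⟨hs, le_max_left _ _⟩
  have htT : uIcc 0 t ⊆ Icc 0 T := uIcc_subset_Icc (left_mem_Icc.2 hT) ⟨ht, le_max_right _ _⟩
  have hAB : Summable fun p : Fin d × List (Fin d) =>
      Mx * ((Mx * T) ^ p.2.length / p.2.length !) *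
        (My * ((My * T) ^ p.2.length / p.2.length !)) := by
    refine (summable_prod_snd_of_nonneg (fun _ => by positivity)
      ((summable_pow_length_div_factorial (c := Mx * T * (My * T)) (by positivity)).mul_left
        (Mx * My))).of_nonneg_of_le (fun _ => by positivity) fun p => ?_
    rw [mul_mul_mul_comm]
    exact mul_le_mul_of_nonneg_left (pow_div_factorial_mul_pow_div_factorial_le
      (by positivity) (by positivity) _) (by positivity)
  simp only [sig_append_singleton hX _ _ hs, sig_append_singleton hY _ _ ht]
  exact tsum_integral_mul_integral_eq
    (fun p => (hX p.1).mul ((continuous_sig hX p.2).comp (.prodMk_right 0)))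
    (fun p => (hY p.1).mul ((continuous_sig hY p.2).comp (.prodMk_right 0)))
    (fun p u hu => hderivX p.1 p.2 u (hsT hu)) (fun p v hv => hderivY p.1 p.2 v (htT hv)) hAB

end Signature

theorem signature_kernel_integral_equation_general {d : ℕ} (T : ℝ)
    (X Y : ℝ → Fin d → ℝ)
    (hX : ∀ a : Fin d, ContDiff ℝ 1 (fun t => X t a))
    (hY : ∀ a : Fin d, ContDiff ℝ 1 (fun t => Y t a))
    (s t : ℝ) (hs : s ∈ Set.Icc (0:ℝ) T) (ht : t ∈ Set.Icc (0:ℝ) T) :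
    (∑' w : List (Fin d), sig X w 0 s * sig Y w 0 t)
      = 1 + ∫ u in (0:ℝ)..s, ∫ v in (0:ℝ)..t,
          (∑' w : List (Fin d), sig X w 0 u * sig Y w 0 v)
            * (∑ a : Fin d, deriv (fun r => X r a) u * deriv (fun r => Y r a) v) := by
  have hX' : ∀ a, Continuous (deriv fun r => X r a) := fun a => (hX a).continuous_deriv le_rfl
  have hY' : ∀ a, Continuous (deriv fun r => Y r a) := fun a => (hY a).continuous_deriv le_rfl
  rw [tsum_list_eq_nil_add_tsum_append_singleton
    (summable_norm_sig_mul_sig hX' hY' hs.1 ht.1).of_norm, sig, sig, one_mul,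
    tsum_sig_append_singleton_mul_eq_integral hX' hY' hs.1 ht.1]
  congr 1
  refine integral_congr fun u hu => integral_congr fun v hv => ?_
  rw [uIcc_of_le hs.1] at hu
  rw [uIcc_of_le ht.1] at hv
  exact tsum_prod_mul_mul_eq (fun a => deriv (fun r => X r a) u)
    (fun a => deriv (fun r => Y r a) v) (summable_norm_sig_mul_sig hX' hY' hu.1 hv.1)

/-- Integral equation for the signature kernel: `U(s,t) = k(X|_{[0,s]}, Y|_{[0,t]})` satisfies
`U(s,t) = 1 + ∫₀ˢ∫₀ᵗ U(u,v) (Ẋ_u · Ẏ_v) dv du`. -/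
theorem signature_kernel_integral_equation {d : ℕ} (T : ℝ) (hT : 0 ≤ T)
    (X Y : ℝ → Fin d → ℝ)
    (hX : ∀ a : Fin d, ContDiff ℝ 1 (fun t => X t a))
    (hY : ∀ a : Fin d, ContDiff ℝ 1 (fun t => Y t a))
    (s t : ℝ) (hs : s ∈ Set.Icc (0:ℝ) T) (ht : t ∈ Set.Icc (0:ℝ) T) :
    (∑' w : List (Fin d), sig X w 0 s * sig Y w 0 t)
      = 1 + ∫ u in (0:ℝ)..s, ∫ v in (0:ℝ)..t,
          (∑' w : List (Fin d), sig X w 0 u * sig Y w 0 v)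
            * (∑ a : Fin d, deriv (fun r => X r a) u * deriv (fun r => Y r a) v) :=
  signature_kernel_integral_equation_general T X Y hX hY s t hs ht
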